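/- Suppose the binary relation ≻ on F satisfies Axioms 1–7. Then the derived relations ≻_p and ≻_o are both asymmetric and negatively transitive. -/

import Mathlib

/-!
Framework: Anscombe–Aumann acts, finitely additive probability measures,
simple acts, hope-and-prepare preferences (Bastianello–Hill style setup).
-/

open Set

section Framework

variable (S : Type*) [MeasurableSpace S]

/-- The measurable sets (events) of `S`, as a subtype. -/
abbrev MSet := {A : Set S // MeasurableSet A}

/-- Finitely additive probability measures on `(S, Σ)`, viewed as real-valued
set functions on events.  The weak* topology is the topology of pointwise
convergence on events, i.e. the product topology on `MSet S → ℝ`. -/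
def ProbCharges : Set (MSet S → ℝ) :=
  {p | (∀ A, 0 ≤ p A) ∧ p ⟨Set.univ, MeasurableSet.univ⟩ = 1 ∧
    ∀ A B : MSet S, Disjoint A.1 B.1 → p ⟨A.1 ∪ B.1, A.2.union B.2⟩ = p A + p B}

end Framework

section Fns

variable {S : Type*} [MeasurableSpace S]

/-- `φ : S → ℝ` is a measurable simple function (an element of `B₀(Σ)`). -/
def IsSimpleFn (φ : S → ℝ) : Prop :=
  (Set.range φ).Finite ∧ ∀ y : ℝ, MeasurableSet (φ ⁻¹' {y})

/-- The integral `∫ φ dp` of a simple function `φ` against a finitely additive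
measure `p` (junk value `0` if `φ` is not simple). -/
noncomputable def fInt (p : MSet S → ℝ) (φ : S → ℝ) : ℝ :=
  @dite _ (IsSimpleFn φ) (Classical.dec _)
    (fun h => ∑ y ∈ h.1.toFinset, y * p ⟨φ ⁻¹' {y}, h.2 y⟩) (fun _ => 0)

/-- A functional `I : B₀(Σ) → ℝ` is monotonic. -/
def MonotonicFn (I : (S → ℝ) → ℝ) : Prop :=
  ∀ φ ψ, IsSimpleFn φ → IsSimpleFn ψ → (∀ s, φ s ≤ ψ s) → I φ ≤ I ψ

/-- A functional `I : B₀(Σ) → ℝ` is constant-linear: `I(aφ + b) = a I(φ) + b`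
for `a ≥ 0`, `b ∈ ℝ`. -/
def ConstLinearFn (I : (S → ℝ) → ℝ) : Prop :=
  ∀ φ, IsSimpleFn φ → ∀ a : ℝ, 0 ≤ a → ∀ b : ℝ,
    I (fun s => a * φ s + b) = a * I φ + b

end Fns

section Acts

variable {S : Type*} [MeasurableSpace S] {V : Type*} [AddCommGroup V] [Module ℝ V]

/-- `f : S → V` is a simple act with outcomes in `X`: it is `X`-valued,
takes finitely many values and is `Σ`-measurable. -/
def IsAct (X : Set V) (f : S → V) : Prop :=
  (∀ s, f s ∈ X) ∧ (Set.range f).Finite ∧ ∀ v : V, MeasurableSet (f ⁻¹' {v})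

/-- Pointwise mixture `αf + (1-α)g` of two acts. -/
def mixAct (α : ℝ) (f g : S → V) : S → V := fun s => α • f s + (1 - α) • g s

/-- The constant act with outcome `x`. -/
def constAct (S : Type*) {V : Type*} (x : V) : S → V := fun _ => x

/-- `u : V → ℝ` is affine on the convex set `X`. -/
def IsAffineOn (u : V → ℝ) (X : Set V) : Prop :=
  ∀ x ∈ X, ∀ y ∈ X, ∀ α : ℝ, 0 ≤ α → α ≤ 1 →
    u (α • x + (1 - α) • y) = α * u x + (1 - α) * u y

/-- `u` is non-constant on `X`. -/
def NonConstOn (u : V → ℝ) (X : Set V) : Prop := ∃ x ∈ X, ∃ y ∈ X, u x ≠ u y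

/-- Expected utility `∫ u(f) dp` of the act `f` under the measure `p`. -/
noncomputable def EU (u : V → ℝ) (f : S → V) (p : MSet S → ℝ) : ℝ :=
  fInt p (fun s => u (f s))

/-- Worst-case expected utility of `f` over the set of scenarios `C`. -/
noncomputable def minEU (u : V → ℝ) (C : Set (MSet S → ℝ)) (f : S → V) : ℝ :=
  sInf (EU u f '' C)

/-- Best-case expected utility of `f` over the set of scenarios `D`. -/
noncomputable def maxEU (u : V → ℝ) (D : Set (MSet S → ℝ)) (f : S → V) : ℝ :=
  sSup (EU u f '' D)

/-- `f` and `g` are incomparable (`f ⋈ g`). -/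
def Incomp (R : (S → V) → (S → V) → Prop) (f g : S → V) : Prop := ¬ R f g ∧ ¬ R g f

end Acts

section Axioms

variable {S : Type*} [MeasurableSpace S] {V : Type*} [AddCommGroup V] [Module ℝ V]
variable (X : Set V) (R : (S → V) → (S → V) → Prop)

/-- Axiom 1: `≻` is asymmetric and transitive on acts, and its restriction to
constant acts is non-trivial and negatively transitive. -/
def PrefAx1 : Prop :=
  (∀ f g, IsAct X f → IsAct X g → R f g → ¬ R g f) ∧
  (∀ f g h, IsAct X f → IsAct X g → IsAct X h → R f g → R g h → R f h) ∧
  (∃ x ∈ X, ∃ y ∈ X, R (constAct S x) (constAct S y)) ∧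
  (∀ x ∈ X, ∀ y ∈ X, ∀ z ∈ X, ¬ R (constAct S x) (constAct S y) →
    ¬ R (constAct S y) (constAct S z) → ¬ R (constAct S x) (constAct S z))

/-- Axiom 2 (continuity). -/
def PrefAx2 : Prop :=
  ∀ f g h, IsAct X f → IsAct X g → IsAct X h →
    IsOpen {α : Set.Icc (0 : ℝ) 1 | R (mixAct (α : ℝ) f g) h} ∧
    IsOpen {α : Set.Icc (0 : ℝ) 1 | R h (mixAct (α : ℝ) f g)}

/-- Axiom 3 (certainty independence). -/
def PrefAx3 : Prop :=
  ∀ f g, IsAct X f → IsAct X g → ∀ x ∈ X, ∀ α : ℝ, 0 < α → α < 1 →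
    (R f g ↔ R (mixAct α f (constAct S x)) (mixAct α g (constAct S x)))

/-- Axiom 4: for any outcome `x`, the upper and lower contour sets at the
constant act `x` are convex. -/
def PrefAx4 : Prop :=
  ∀ x ∈ X,
    (∀ f g, IsAct X f → IsAct X g → R f (constAct S x) → R g (constAct S x) →
      ∀ α : ℝ, 0 ≤ α → α ≤ 1 → R (mixAct α f g) (constAct S x)) ∧
    (∀ f g, IsAct X f → IsAct X g → R (constAct S x) f → R (constAct S x) g →
      ∀ α : ℝ, 0 ≤ α → α ≤ 1 → R (constAct S x) (mixAct α f g))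

/-- Axiom 5 (monotonicity). -/
def PrefAx5 : Prop :=
  ∀ f g, IsAct X f → IsAct X g →
    (∀ s : S, R (constAct S (f s)) (constAct S (g s))) → R f g

/-- Axiom 6: if every outcome incomparable to `f` is incomparable to `g`,
then `f` and `g` are incomparable. -/
def PrefAx6 : Prop :=
  ∀ f g, IsAct X f → IsAct X g →
    (∀ x ∈ X, Incomp R f (constAct S x) → Incomp R g (constAct S x)) → Incomp R f g

/-- Axiom 7: if `f ⋈ x`, `x ≻ g`, `g ⋈ y` and `f ≻ y`, then `f ≻ g`. -/
def PrefAx7 : Prop :=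
  ∀ f g, IsAct X f → IsAct X g → ∀ x ∈ X, ∀ y ∈ X,
    Incomp R f (constAct S x) → R (constAct S x) g →
    Incomp R g (constAct S y) → R f (constAct S y) → R f g

end Axioms

section Reps

variable {S : Type*} [MeasurableSpace S] {V : Type*} [AddCommGroup V] [Module ℝ V]

/-- `(u, C, D)` is a hope-and-prepare representation of `R`. -/
def IsHPRep (X : Set V) (R : (S → V) → (S → V) → Prop) (u : V → ℝ)
    (C D : Set (MSet S → ℝ)) : Prop :=
  IsAffineOn u X ∧ NonConstOn u X ∧
  C.Nonempty ∧ D.Nonempty ∧ C ⊆ ProbCharges S ∧ D ⊆ ProbCharges S ∧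
  IsCompact C ∧ IsCompact D ∧ Convex ℝ C ∧ Convex ℝ D ∧ (C ∩ D).Nonempty ∧
  ∀ f g, IsAct X f → IsAct X g →
    (R f g ↔ (minEU u C g < minEU u C f ∧ maxEU u D g < maxEU u D f))

/-- `(u, C)` is a Bewley representation of `R`. -/
def IsBewleyRep (X : Set V) (R : (S → V) → (S → V) → Prop) (u : V → ℝ)
    (C : Set (MSet S → ℝ)) : Prop :=
  IsAffineOn u X ∧ NonConstOn u X ∧
  C.Nonempty ∧ C ⊆ ProbCharges S ∧ IsCompact C ∧ Convex ℝ C ∧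
  ∀ f g, IsAct X f → IsAct X g → (R f g ↔ ∀ p ∈ C, EU u g p < EU u f p)

/-- `(u, C, D)` is a twofold multi-prior representation of `R`. -/
def IsTwofoldRep (X : Set V) (R : (S → V) → (S → V) → Prop) (u : V → ℝ)
    (C D : Set (MSet S → ℝ)) : Prop :=
  IsAffineOn u X ∧ NonConstOn u X ∧
  C.Nonempty ∧ D.Nonempty ∧ C ⊆ ProbCharges S ∧ D ⊆ ProbCharges S ∧
  IsCompact C ∧ IsCompact D ∧ Convex ℝ C ∧ Convex ℝ D ∧ (C ∩ D).Nonempty ∧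
  ∀ f g, IsAct X f → IsAct X g → (R f g ↔ maxEU u D g < minEU u C f)

end Reps

section Statement

variable {S : Type*} [MeasurableSpace S] [Nonempty S]
variable {V : Type*} [AddCommGroup V] [Module ℝ V]

/-- The derived pessimistic relation: `g ≻_p f` iff there is an outcome `x`
with `g ≻ x` and `x ⋈ f`. -/
def PessRel (X : Set V) (R : (S → V) → (S → V) → Prop) (g f : S → V) : Prop :=
  ∃ x ∈ X, R g (constAct S x) ∧ Incomp R (constAct S x) f

/-- The derived optimistic relation: `g ≻_o f` iff there is an outcome `x`
with `x ⋈ g` and `x ≻ f`. -/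
def OptRel (X : Set V) (R : (S → V) → (S → V) → Prop) (g f : S → V) : Prop :=
  ∃ x ∈ X, Incomp R (constAct S x) g ∧ R (constAct S x) f

end Statement

/-!
On constant acts `≻` is a strict weak order, and both derived relations compare acts through
the constants. Three facts carry the argument.
(1) An act none of whose outcomes is above the constant `x` is not above `x`: if `f ≻ x`,
continuity lets one mix `f` slightly with a constant below `x` (raising `x` first if nothing lies
below it) and stay above `x`, whereas certainty independence and monotonicity put that mixture
below `x`.
(2) If `f ≻ x` and `y` is not above `x`, then `f ≻ y`: by (1) some constant lies above `x`, so
continuity places a constant `w` with `f ≻ w ≻ x`, and then `w ≻ y`.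
(3) Every act is incomparable to some constant: by (1) it is neither above its best outcome nor
below its worst, and if it lies strictly between two constants, connectedness of `[0, 1]` gives
an incomparable mixture of them.
Reversing `≻` preserves Axioms 1, 2, 3 and 5 and turns `≻_o` into the reverse of `≻_p`, so the
optimistic case is the pessimistic one for the reversed relation.
-/

open Filter Topology

theorem exists_mem_Ioo_of_isOpen_setOf {P : ℝ → Prop}
    (hP : IsOpen {α : Icc (0 : ℝ) 1 | P α}) (h0 : P 0) : ∃ t ∈ Ioo (0 : ℝ) 1, P t := by
  have hnhds : ∀ᶠ a in 𝓝 (0 : ℝ), P (projIcc 0 1 zero_le_one a) :=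
    (continuous_projIcc.tendsto 0).eventually
      (hP.mem_nhds (by simpa [projIcc_of_mem] using h0))
  obtain ⟨t, ht, htI⟩ :=
    ((hnhds.filter_mono nhdsWithin_le_nhds).and (Ioo_mem_nhdsGT one_pos)).exists
  exact ⟨t, htI, by rwa [projIcc_of_mem _ (Ioo_subset_Icc_self htI)] at ht⟩

section Acts

variable {S V : Type*}

theorem isAct_constAct [MeasurableSpace S] {X : Set V} {x : V} (hx : x ∈ X) :
    IsAct X (constAct S x) :=
  ⟨fun _ => hx, (MeasureTheory.SimpleFunc.const S x).finite_range,
    (MeasureTheory.SimpleFunc.const S x).measurableSet_fiber⟩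

variable [AddCommGroup V] [Module ℝ V]

theorem mixAct_zero (f g : S → V) : mixAct 0 f g = g := by
  funext s; simp [mixAct]

theorem mixAct_one (f g : S → V) : mixAct 1 f g = f := by
  funext s; simp [mixAct]

theorem mixAct_self (α : ℝ) (f : S → V) : mixAct α f f = f := by
  funext s; simp [mixAct, ← add_smul]

theorem mixAct_one_sub (α : ℝ) (f g : S → V) : mixAct (1 - α) f g = mixAct α g f := by
  funext s; simp [mixAct, add_comm]

theorem mixAct_constAct (α : ℝ) (x y : V) :
    mixAct α (constAct S x) (constAct S y) = constAct S (α • x + (1 - α) • y) := rfl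

theorem IsAct.mixAct [MeasurableSpace S] {X : Set V} {f g : S → V} (hX : Convex ℝ X)
    (hf : IsAct X f) (hg : IsAct X g) {α : ℝ} (h0 : 0 ≤ α) (h1 : α ≤ 1) :
    IsAct X (mixAct α f g) := by
  let F : MeasureTheory.SimpleFunc S V := ⟨f, hf.2.2, hf.2.1⟩
  let G : MeasureTheory.SimpleFunc S V := ⟨g, hg.2.2, hg.2.1⟩
  let M := (F.pair G).map fun p => α • p.1 + (1 - α) • p.2
  exact ⟨fun s => hX (hf.1 s) (hg.1 s) h0 (by linarith) (by ring), M.finite_range,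
    M.measurableSet_fiber⟩

end Acts

section Axioms

variable {S V : Type*} [MeasurableSpace S] [AddCommGroup V] [Module ℝ V]

structure PrefAx1235 (X : Set V) (R : (S → V) → (S → V) → Prop) : Prop where
  convex : Convex ℝ X
  ax1 : PrefAx1 X R
  ax2 : PrefAx2 X R
  ax3 : PrefAx3 X R
  ax5 : PrefAx5 X R

variable {X : Set V} {R : (S → V) → (S → V) → Prop}

theorem PrefAx1235.flip (hR : PrefAx1235 X R) : PrefAx1235 X (flip R) where
  convex := hR.convex
  ax1 := by
    obtain ⟨hasymm, htrans, ⟨x, hx, y, hy, hxy⟩, hneg⟩ := hR.ax1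
    exact ⟨fun f g hf hg => hasymm g f hg hf,
      fun f g h hf hg hh hfg hgh => htrans h g f hh hg hf hgh hfg, ⟨y, hy, x, hx, hxy⟩,
      fun x hx y hy z hz hxy hyz => hneg z hz y hy x hx hyz hxy⟩
  ax2 f g h hf hg hh := (hR.ax2 f g h hf hg hh).symm
  ax3 f g hf hg := hR.ax3 g f hg hf
  ax5 f g hf hg := hR.ax5 g f hg hf

end Axioms

namespace PrefAx1235

variable {S V : Type*} [MeasurableSpace S] [AddCommGroup V] [Module ℝ V]
  {X : Set V} {R : (S → V) → (S → V) → Prop} {f g h : S → V} {x y z : V}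

theorem asymm (hR : PrefAx1235 X R) (hf : IsAct X f) (hg : IsAct X g) (hfg : R f g) :
    ¬ R g f :=
  hR.ax1.1 f g hf hg hfg

theorem trans (hR : PrefAx1235 X R) (hf : IsAct X f) (hg : IsAct X g) (hh : IsAct X h)
    (hfg : R f g) (hgh : R g h) : R f h :=
  hR.ax1.2.1 f g h hf hg hh hfg hgh

theorem negTrans_constAct (hR : PrefAx1235 X R) (hx : x ∈ X) (hy : y ∈ X)
    (hz : z ∈ X) (hxy : ¬ R (constAct S x) (constAct S y))
    (hyz : ¬ R (constAct S y) (constAct S z)) : ¬ R (constAct S x) (constAct S z) :=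
  hR.ax1.2.2.2 x hx y hy z hz hxy hyz

theorem rel_constAct_mix_of_rel (hR : PrefAx1235 X R) (hx : x ∈ X) (hy : y ∈ X)
    (hxy : R (constAct S x) (constAct S y)) (hz : z ∈ X) {t : ℝ} (ht : t ∈ Ioo (0 : ℝ) 1) :
    R (constAct S (t • x + (1 - t) • z)) (constAct S (t • y + (1 - t) • z)) :=
  (hR.ax3 _ _ (isAct_constAct hx) (isAct_constAct hy) z hz t ht.1 ht.2).1 hxy

theorem exists_mixAct_rel (hR : PrefAx1235 X R) (hf : IsAct X f) (hg : IsAct X g)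
    (hh : IsAct X h) (hgh : R g h) : ∃ t ∈ Ioo (0 : ℝ) 1, R (mixAct t f g) h :=
  exists_mem_Ioo_of_isOpen_setOf (P := fun t => R (mixAct t f g) h)
    (hR.ax2 f g h hf hg hh).1 (by rwa [mixAct_zero])

theorem exists_rel_mixAct (hR : PrefAx1235 X R) (hf : IsAct X f) (hg : IsAct X g)
    (hh : IsAct X h) (hhg : R h g) : ∃ t ∈ Ioo (0 : ℝ) 1, R h (mixAct t f g) :=
  exists_mem_Ioo_of_isOpen_setOf (P := fun t => R h (mixAct t f g))
    (hR.ax2 f g h hf hg hh).2 (by rwa [mixAct_zero])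

theorem exists_constAct_between (hR : PrefAx1235 X R) (hf : IsAct X f) (hx : x ∈ X)
    (hy : y ∈ X) (hfx : R f (constAct S x)) (hyx : R (constAct S y) (constAct S x)) :
    ∃ w ∈ X, R f (constAct S w) ∧ R (constAct S w) (constAct S x) := by
  obtain ⟨t, ht, hft⟩ :=
    hR.exists_rel_mixAct (isAct_constAct hy) (isAct_constAct hx) hf hfx
  refine ⟨t • y + (1 - t) • x, hR.convex hy hx ht.1.le (by linarith [ht.2]) (by ring), hft,
    ?_⟩
  simpa only [← mixAct_constAct, mixAct_self] using hR.rel_constAct_mix_of_rel hy hx hyx hx ht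

theorem not_rel_constAct_of_forall_of_rel (hR : PrefAx1235 X R) (hf : IsAct X f)
    (hx : x ∈ X) (hy : y ∈ X) (hxy : R (constAct S x) (constAct S y))
    (hvals : ∀ s, ¬ R (constAct S (f s)) (constAct S x)) : ¬ R f (constAct S x) := by
  intro hfx
  obtain ⟨t, ht, hft⟩ := hR.exists_mixAct_rel (isAct_constAct hy) hf (isAct_constAct hx) hfx
  have hmix : ∀ v ∈ X, t • y + (1 - t) • v ∈ X := fun v hv =>
    hR.convex hy hv ht.1.le (by linarith [ht.2]) (by ring)
  have hft_act : IsAct X (mixAct t (constAct S y) f) :=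
    (isAct_constAct hy).mixAct hR.convex hf ht.1.le ht.2.le
  refine hR.asymm hft_act (isAct_constAct hx) hft
    (hR.ax5 _ _ (isAct_constAct hx) hft_act fun s => ?_)
  have hx_above : R (constAct S x) (constAct S (t • y + (1 - t) • x)) := by
    simpa only [← mixAct_constAct, mixAct_self] using hR.rel_constAct_mix_of_rel hx hy hxy hx ht
  have hfs_not_above : ¬ R (constAct S (t • y + (1 - t) • f s))
      (constAct S (t • y + (1 - t) • x)) := by
    have h := (hR.ax3 _ _ (isAct_constAct (hf.1 s)) (isAct_constAct hx) y hy (1 - t)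
      (by linarith [ht.2]) (by linarith [ht.1])).not.1 (hvals s)
    rwa [mixAct_one_sub, mixAct_one_sub] at h
  by_contra hs
  exact hR.negTrans_constAct hx (hmix _ (hf.1 s)) (hmix x hx) hs hfs_not_above hx_above

theorem not_rel_constAct_of_forall (hR : PrefAx1235 X R) (hf : IsAct X f) (hx : x ∈ X)
    (hvals : ∀ s, ¬ R (constAct S (f s)) (constAct S x)) : ¬ R f (constAct S x) := by
  by_cases hbelow : ∃ y ∈ X, R (constAct S x) (constAct S y)
  · obtain ⟨y, hy, hxy⟩ := hbelow
    exact hR.not_rel_constAct_of_forall_of_rel hf hx hy hxy hvals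
  push Not at hbelow
  intro hfx
  obtain ⟨a, ha, b, hb, hab⟩ := hR.ax1.2.2.1
  have hax : R (constAct S a) (constAct S x) :=
    by_contra fun hax => hR.negTrans_constAct ha hx hb hax (hbelow b hb) hab
  obtain ⟨w, hw, hfw, hwx⟩ := hR.exists_constAct_between hf hx ha hfx hax
  exact hR.not_rel_constAct_of_forall_of_rel hf hw hx hwx
    (fun s hs => hvals s (hR.trans (isAct_constAct (hf.1 s)) (isAct_constAct hw)
      (isAct_constAct hx) hs hwx)) hfw

theorem rel_constAct_of_rel_of_not_rel (hR : PrefAx1235 X R) (hf : IsAct X f) (hx : x ∈ X)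
    (hy : y ∈ X) (hfx : R f (constAct S x)) (hyx : ¬ R (constAct S y) (constAct S x)) :
    R f (constAct S y) := by
  by_cases habove : ∃ z ∈ X, R (constAct S z) (constAct S x)
  · obtain ⟨z, hz, hzx⟩ := habove
    obtain ⟨w, hw, hfw, hwx⟩ := hR.exists_constAct_between hf hx hz hfx hzx
    exact hR.trans hf (isAct_constAct hw) (isAct_constAct hy) hfw
      (by_contra fun hwy => hR.negTrans_constAct hw hy hx hwy hyx hwx)
  push Not at habove
  exact absurd hfx (hR.not_rel_constAct_of_forall hf hx fun s => habove _ (hf.1 s))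

theorem exists_incomp_of_rel_of_rel (hR : PrefAx1235 X R) (hg : IsAct X g) (hx : x ∈ X)
    (hy : y ∈ X) (hxg : R (constAct S x) g) (hgy : R g (constAct S y)) :
    ∃ w ∈ X, Incomp R (constAct S w) g := by
  by_contra hnone
  push Not at hnone
  obtain ⟨habove, hbelow⟩ := hR.ax2 _ _ g (isAct_constAct hx) (isAct_constAct hy) hg
  have hcover : ∀ t : Icc (0 : ℝ) 1, R (mixAct t (constAct S x) (constAct S y)) g ∨
      R g (mixAct t (constAct S x) (constAct S y)) := by
    intro t
    rw [or_iff_not_and_not]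
    exact hnone _ (hR.convex hx hy t.2.1 (by linarith [t.2.2]) (by ring))
  obtain ⟨t, -, htabove, htbelow⟩ := isPreconnected_univ _ _ habove hbelow
    (fun t _ => hcover t) ⟨1, trivial, by simpa [mixAct_one] using hxg⟩
    ⟨0, trivial, by simpa [mixAct_zero] using hgy⟩
  exact hR.asymm ((isAct_constAct hx).mixAct hR.convex (isAct_constAct hy) t.2.1 t.2.2) hg
    htabove htbelow

theorem exists_maximal_value [Nonempty S] (hR : PrefAx1235 X R) (hg : IsAct X g) :
    ∃ z ∈ X, ∀ s, ¬ R (constAct S (g s)) (constAct S z) := by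
  have : Finite (range g) := hg.2.1.to_subtype
  have hmem : ∀ u : range g, u.1 ∈ X := fun ⟨_, s, hs⟩ => hs ▸ hg.1 s
  let r : range g → range g → Prop := fun u v => R (constAct S u) (constAct S v)
  have : IsTrans (range g) r := ⟨fun u v w => hR.trans (isAct_constAct (hmem u))
    (isAct_constAct (hmem v)) (isAct_constAct (hmem w))⟩
  have : Std.Irrefl r :=
    ⟨fun u hu => hR.asymm (isAct_constAct (hmem u)) (isAct_constAct (hmem u)) hu hu⟩
  obtain ⟨z, -, hz⟩ := (Finite.wellFounded_of_trans_of_irrefl r).has_min univ univ_nonempty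
  exact ⟨z, hmem z, fun s => hz ⟨g s, s, rfl⟩ trivial⟩

theorem exists_incomp_constAct [Nonempty S] (hR : PrefAx1235 X R) (hg : IsAct X g) :
    ∃ w ∈ X, Incomp R (constAct S w) g := by
  obtain ⟨z, hz, hz_max⟩ := hR.exists_maximal_value hg
  obtain ⟨y, hy, hy_min⟩ := hR.flip.exists_maximal_value hg
  have hgz : ¬ R g (constAct S z) := hR.not_rel_constAct_of_forall hg hz hz_max
  have hyg : ¬ R (constAct S y) g := hR.flip.not_rel_constAct_of_forall hg hy hy_min
  by_cases hzg : R (constAct S z) g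
  · by_cases hgy : R g (constAct S y)
    · exact hR.exists_incomp_of_rel_of_rel hg hz hy hzg hgy
    · exact ⟨y, hy, hyg, hgy⟩
  · exact ⟨z, hz, hzg, hgz⟩

theorem pessRel_asymm (hR : PrefAx1235 X R) (hf : IsAct X f) (hg : IsAct X g) :
    PessRel X R f g → ¬ PessRel X R g f := by
  rintro ⟨x, hx, hfx, hxg⟩ ⟨y, hy, hgy, hyf⟩
  by_cases hyx : R (constAct S y) (constAct S x)
  · exact hxg.2 (hR.trans hg (isAct_constAct hy) (isAct_constAct hx) hgy hyx)
  · exact hyf.2 (hR.rel_constAct_of_rel_of_not_rel hf hx hy hfx hyx)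

theorem pessRel_negTrans [Nonempty S] (hR : PrefAx1235 X R) (hf : IsAct X f)
    (hg : IsAct X g) (hfg : ¬ PessRel X R f g) (hgh : ¬ PessRel X R g h) :
    ¬ PessRel X R f h := by
  rintro ⟨x, hx, hfx, hxh⟩
  have hxg : R (constAct S x) g := by
    by_contra hxg
    by_cases hgx : R g (constAct S x)
    · exact hgh ⟨x, hx, hgx, hxh⟩
    · exact hfg ⟨x, hx, hfx, hxg, hgx⟩
  obtain ⟨w, hw, hwg⟩ := hR.exists_incomp_constAct hg
  have hwx : ¬ R (constAct S w) (constAct S x) :=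
    fun hwx => hwg.1 (hR.trans (isAct_constAct hw) (isAct_constAct hx) hg hwx hxg)
  exact hfg ⟨w, hw, hR.rel_constAct_of_rel_of_not_rel hf hx hw hfx hwx, hwg⟩

end PrefAx1235

theorem optRel_iff_pessRel_flip {S V : Type*} {X : Set V} {R : (S → V) → (S → V) → Prop}
    {f g : S → V} : OptRel X R g f ↔ PessRel X (flip R) f g := by
  constructor
  · rintro ⟨x, hx, hxg, hxf⟩
    exact ⟨x, hx, hxf, hxg.symm⟩
  · rintro ⟨x, hx, hxf, hxg⟩
    exact ⟨x, hx, hxg.symm, hxf⟩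

section Statement

variable {S : Type*} [MeasurableSpace S] [Nonempty S]
variable {V : Type*} [AddCommGroup V] [Module ℝ V]

theorem statement15_general (X : Set V) (hX : Convex ℝ X)
    (R : (S → V) → (S → V) → Prop)
    (hax : PrefAx1 X R ∧ PrefAx2 X R ∧ PrefAx3 X R ∧ PrefAx4 X R ∧ PrefAx5 X R ∧
      PrefAx6 X R ∧ PrefAx7 X R) :
    ((∀ f g, IsAct X f → IsAct X g → PessRel X R f g → ¬ PessRel X R g f) ∧
      (∀ f g h, IsAct X f → IsAct X g → IsAct X h →
        ¬ PessRel X R f g → ¬ PessRel X R g h → ¬ PessRel X R f h)) ∧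
    ((∀ f g, IsAct X f → IsAct X g → OptRel X R f g → ¬ OptRel X R g f) ∧
      (∀ f g h, IsAct X f → IsAct X g → IsAct X h →
        ¬ OptRel X R f g → ¬ OptRel X R g h → ¬ OptRel X R f h)) := by
  obtain ⟨h1, h2, h3, -, h5, -⟩ := hax
  have hR : PrefAx1235 X R := ⟨hX, h1, h2, h3, h5⟩
  refine ⟨⟨fun f g hf hg => hR.pessRel_asymm hf hg,
    fun f g h hf hg _ => hR.pessRel_negTrans hf hg⟩, ⟨?_, ?_⟩⟩
  · intro f g hf hg
    simpa only [optRel_iff_pessRel_flip] using hR.flip.pessRel_asymm hg hf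
  · intro f g h _ hg hh hfg hgh
    simpa only [optRel_iff_pessRel_flip] using hR.flip.pessRel_negTrans hh hg
      (optRel_iff_pessRel_flip.not.1 hgh) (optRel_iff_pessRel_flip.not.1 hfg)

/-- Step 1: under Axioms 1–7, the derived relations `≻_p`
and `≻_o` are asymmetric and negatively transitive on acts. -/
theorem statement15 (X : Set V) (hX : Convex ℝ X) (hX2 : ∃ x ∈ X, ∃ y ∈ X, x ≠ y)
    (R : (S → V) → (S → V) → Prop)
    (hax : PrefAx1 X R ∧ PrefAx2 X R ∧ PrefAx3 X R ∧ PrefAx4 X R ∧ PrefAx5 X R ∧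
      PrefAx6 X R ∧ PrefAx7 X R) :
    ((∀ f g, IsAct X f → IsAct X g → PessRel X R f g → ¬ PessRel X R g f) ∧
      (∀ f g h, IsAct X f → IsAct X g → IsAct X h →
        ¬ PessRel X R f g → ¬ PessRel X R g h → ¬ PessRel X R f h)) ∧
    ((∀ f g, IsAct X f → IsAct X g → OptRel X R f g → ¬ OptRel X R g f) ∧
      (∀ f g h, IsAct X f → IsAct X g → IsAct X h →
        ¬ OptRel X R f g → ¬ OptRel X R g h → ¬ OptRel X R f h)) :=
  statement15_general X hX R hax

end Statement
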